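/- arXiv:1802.05759 — 2 statements merged into one kernel-verified Lean document; each statement's English description precedes it below -/
import Mathlib

section
/- Let A ∈ ℂ^{m×m} and B ∈ ℂ^{n×n} be Hermitian, with unitary P, Q and real diagonal matrices such that P* A P = diag(λ_1,...,λ_m) and Q* B Q = diag(μ_1,...,μ_n). Let c ∈ ℂ^m, d ∈ ℂ^n, and let U ∈ ℂ^{m×k} have orthonormal columns spanning span{c, Ac, ..., A^{k-1}c} (assumed of dimension k) and V ∈ ℂ^{n×ℓ} have orthonormal columns spanning span{d, Bd, ..., B^{ℓ-1}d} (assumed of dimension ℓ). Set G = U* A U and H = V* B V (which are Hermitian); let P̂, Q̂ be unitary with P̂* G P̂ = diag(γ_1,...,γ_k), Q̂* H Q̂ = diag(η_1,...,η_ℓ). Let [a_A, b_A] and [a_B, b_B] be real intervals with all λ_a ∈ [a_A, b_A] and all μ_b ∈ [a_B, b_B] (then also all γ_i ∈ [a_A, b_A] and all η_j ∈ [a_B, b_B]). Let f : ℝ × ℝ → ℂ be any function, and define X_f = P ( (f(λ_a, μ_b))_{a,b} ∘ (P* (c d^T) Q̄) ) Q^T and Y_f = P̂ ( (f(γ_i,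 η_j))_{i,j} ∘ (P̂* (U* c)(V* d)^T Q̂̄) ) Q̂^T. Then for every bivariate polynomial p(x,y) = Σ_{i=0}^{k-1} Σ_{j=0}^{ℓ-1} p_{ij} x^i y^j of bidegree at most (k−1, ℓ−1): ‖X_f − U Y_f V^T‖_F ≤ 2 ‖c‖_2 ‖d‖_2 · max_{x ∈ [a_A,b_A], y ∈ [a_B,b_B]} |f(x,y) − p(x,y)|. -/
open Matrix

noncomputable def frobNorm {m n : ℕ} (M : Matrix (Fin m) (Fin n) ℂ) : ℝ :=
  Real.sqrt (∑ a, ∑ b, ‖M a b‖ ^ 2)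

noncomputable def euclNorm {m : ℕ} (c : Fin m → ℂ) : ℝ :=
  Real.sqrt (∑ a, ‖c a‖ ^ 2)

/-!
For a polynomial `p` of bidegree below `(k, ℓ)` the method is exact: `p{A,B}(c dᵀ)` is the sum of
the `p_ij (Aⁱ c)(Bʲ d)ᵀ`, and since `Aⁱ c` lies in the range of `U` for `i < k`, one has
`U (Uᴴ A U)ⁱ Uᴴ c = Aⁱ c`; hence `U p{G,H}((Uᴴ c)(Vᴴ d)ᵀ) Vᵀ = p{A,B}(c dᵀ)`. Subtracting this, the
error is `(f - p){A,B}(c dᵀ) - U (f - p){G,H}((Uᴴ c)(Vᴴ d)ᵀ) Vᵀ`. Each term is a unitary sandwich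
of a Hadamard product of `(f - p)` evaluated at eigenvalues with a rank-one matrix `u vᵀ`, so its
Frobenius norm is at most `sup |f - p| · ‖u‖ ‖v‖`. The eigenvalues `γ_i`, `η_j` of the compressions
are Rayleigh quotients, hence lie in the same intervals, and `‖Uᴴ c‖ ≤ ‖c‖`.
-/

section Isometry

variable {ι κ : Type*} [Fintype ι] [Fintype κ] [DecidableEq κ]

lemma ofReal_sum_norm_sq (v : ι → ℂ) : ((∑ a, ‖v a‖ ^ 2 : ℝ) : ℂ) = star v ⬝ᵥ v := by
  push_cast
  exact Finset.sum_congr rfl fun a _ => (Complex.conj_mul' (v a)).symm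

lemma star_mulVec_dotProduct_mulVec {W : Matrix ι κ ℂ} (hW : Wᴴ * W = 1) (x y : κ → ℂ) :
    star (W *ᵥ x) ⬝ᵥ (W *ᵥ y) = star x ⬝ᵥ y := by
  rw [star_mulVec, dotProduct_mulVec, vecMul_vecMul, hW, vecMul_one]

lemma sum_norm_sq_mulVec {W : Matrix ι κ ℂ} (hW : Wᴴ * W = 1) (x : κ → ℂ) :
    ∑ a, ‖(W *ᵥ x) a‖ ^ 2 = ∑ a, ‖x a‖ ^ 2 :=
  Complex.ofReal_injective <| by
    rw [ofReal_sum_norm_sq, ofReal_sum_norm_sq, star_mulVec_dotProduct_mulVec hW]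

lemma sum_norm_sq_conjTranspose_mulVec_le {W : Matrix ι κ ℂ} (hW : Wᴴ * W = 1) (x : ι → ℂ) :
    ∑ a, ‖(Wᴴ *ᵥ x) a‖ ^ 2 ≤ ∑ a, ‖x a‖ ^ 2 := by
  set y := Wᴴ *ᵥ x
  have hxy : star x ⬝ᵥ (W *ᵥ y) = star y ⬝ᵥ y := by
    rw [dotProduct_mulVec, ← conjTranspose_conjTranspose W, ← star_mulVec]
  have hyx : star (W *ᵥ y) ⬝ᵥ x = star y ⬝ᵥ y := by
    rw [star_mulVec, ← dotProduct_mulVec]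
  -- Pythagoras for the orthogonal projection `W Wᴴ x` of `x`
  have hpyth : ∑ a, ‖x a‖ ^ 2 = ∑ a, ‖(x - W *ᵥ y) a‖ ^ 2 + ∑ a, ‖y a‖ ^ 2 := by
    refine Complex.ofReal_injective ?_
    rw [Complex.ofReal_add, ofReal_sum_norm_sq, ofReal_sum_norm_sq, ofReal_sum_norm_sq, star_sub,
      sub_dotProduct, dotProduct_sub, dotProduct_sub, hxy, hyx, star_mulVec_dotProduct_mulVec hW]
    ring
  linarith [Finset.sum_nonneg fun a (_ : a ∈ Finset.univ) => sq_nonneg ‖(x - W *ᵥ y) a‖]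

end Isometry

section Norms

variable {m n k : ℕ}

lemma euclNorm_nonneg (v : Fin m → ℂ) : 0 ≤ euclNorm v :=
  Real.sqrt_nonneg _

lemma euclNorm_mulVec_of_isometry {W : Matrix (Fin m) (Fin k) ℂ} (hW : Wᴴ * W = 1)
    (x : Fin k → ℂ) : euclNorm (W *ᵥ x) = euclNorm x := by
  rw [euclNorm, euclNorm, sum_norm_sq_mulVec hW]

lemma euclNorm_conjTranspose_mulVec_le {W : Matrix (Fin m) (Fin k) ℂ} (hW : Wᴴ * W = 1)
    (x : Fin m → ℂ) : euclNorm (Wᴴ *ᵥ x) ≤ euclNorm x :=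
  Real.sqrt_le_sqrt (sum_norm_sq_conjTranspose_mulVec_le hW x)

lemma frobNorm_sub_le (M N : Matrix (Fin m) (Fin n) ℂ) :
    frobNorm (M - N) ≤ frobNorm M + frobNorm N := by
  let _ := Matrix.frobeniusSeminormedAddCommGroup (m := Fin m) (n := Fin n) (α := ℂ)
  have h (M : Matrix (Fin m) (Fin n) ℂ) : frobNorm M = ‖M‖ := by
    rw [frobenius_norm_def, frobNorm, Real.sqrt_eq_rpow]
    norm_cast
  simpa only [h] using norm_sub_le M N

lemma frobNorm_transpose (M : Matrix (Fin m) (Fin n) ℂ) : frobNorm Mᵀ = frobNorm M := by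
  rw [frobNorm, frobNorm, Finset.sum_comm]
  rfl

lemma frobNorm_mul_of_isometry {W : Matrix (Fin m) (Fin k) ℂ} (hW : Wᴴ * W = 1)
    (M : Matrix (Fin k) (Fin n) ℂ) : frobNorm (W * M) = frobNorm M := by
  rw [frobNorm, frobNorm, Finset.sum_comm, Finset.sum_comm (γ := Fin k)]
  congr 1
  exact Finset.sum_congr rfl fun b _ => sum_norm_sq_mulVec hW (M.col b)

lemma frobNorm_mul_mul_transpose_of_isometry {k' : ℕ} {W : Matrix (Fin m) (Fin k) ℂ}
    {N : Matrix (Fin n) (Fin k') ℂ} (hW : Wᴴ * W = 1) (hN : Nᴴ * N = 1)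
    (M : Matrix (Fin k) (Fin k') ℂ) : frobNorm (W * M * Nᵀ) = frobNorm M := by
  rw [← frobNorm_transpose, transpose_mul, transpose_transpose, frobNorm_mul_of_isometry hN,
    frobNorm_transpose, frobNorm_mul_of_isometry hW]

lemma frobNorm_hadamard_le {g : Matrix (Fin m) (Fin n) ℂ} {K : ℝ} (hK : 0 ≤ K)
    (hg : ∀ a b, ‖g a b‖ ≤ K) (M : Matrix (Fin m) (Fin n) ℂ) :
    frobNorm (g ⊙ M) ≤ K * frobNorm M := by
  rw [frobNorm, frobNorm, ← Real.sqrt_sq hK, ← Real.sqrt_mul (sq_nonneg K), Finset.mul_sum]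
  gcongr with a _
  rw [Finset.mul_sum]
  gcongr with b _
  rw [hadamard_apply, norm_mul, mul_pow]
  gcongr
  exact hg a b

lemma frobNorm_vecMulVec (u : Fin m → ℂ) (v : Fin n → ℂ) :
    frobNorm (vecMulVec u v) = euclNorm u * euclNorm v := by
  rw [frobNorm, euclNorm, euclNorm, ← Real.sqrt_mul (Finset.sum_nonneg fun _ _ => sq_nonneg _),
    Finset.sum_mul_sum]
  simp only [vecMulVec_apply, norm_mul, mul_pow]

end Norms

section Spectral

variable {ι : Type*} [Fintype ι] [DecidableEq ι]

lemma pow_eq_mul_pow_mul_conjTranspose {P A D : Matrix ι ι ℂ} (hP : Pᴴ * P = 1)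
    (hA : Pᴴ * A * P = D) (i : ℕ) : A ^ i = P * D ^ i * Pᴴ := by
  have hP' : P * Pᴴ = 1 := mul_eq_one_comm.mp hP
  have hAP : SemiconjBy P D A := by
    rw [SemiconjBy, ← hA, ← Matrix.mul_assoc, ← Matrix.mul_assoc, hP', Matrix.one_mul]
  rw [(hAP.pow_right i).eq, Matrix.mul_assoc, hP', Matrix.mul_one]

lemma transpose_pow_eq_map_mul_pow_mul_transpose {Q B : Matrix ι ι ℂ} {mu : ι → ℂ}
    (hQ : Qᴴ * Q = 1) (hB : Qᴴ * B * Q = diagonal mu) (j : ℕ) :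
    Bᵀ ^ j = Q.map (starRingEnd ℂ) * diagonal mu ^ j * Qᵀ := by
  rw [← transpose_pow, pow_eq_mul_pow_mul_conjTranspose hQ hB, transpose_mul, transpose_mul,
    diagonal_pow, diagonal_transpose, conjTranspose_transpose, Matrix.mul_assoc]
  rfl

end Spectral

lemma mem_Icc_of_diagonal_compression {ι κ : Type*} [Fintype ι] [DecidableEq ι]
    [DecidableEq κ] {Z : Matrix ι κ ℂ} {lam : ι → ℝ} {gam : κ → ℝ}
    (hZ : Zᴴ * Z = 1)
    (h : Zᴴ * diagonal (fun a => (lam a : ℂ)) * Z = diagonal fun i => (gam i : ℂ))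
    {lo hi : ℝ} (hlam : ∀ a, lam a ∈ Set.Icc lo hi) (i : κ) : gam i ∈ Set.Icc lo hi := by
  have hw : ∑ s, ‖Z s i‖ ^ 2 = 1 := Complex.ofReal_injective <| by
    rw [ofReal_sum_norm_sq, Complex.ofReal_one, ← one_apply_eq i, ← hZ]
    rfl
  have hgam : gam i = ∑ s, ‖Z s i‖ ^ 2 * lam s := by
    have := congrFun (congrFun h i) i
    simp only [mul_apply, conjTranspose_apply, diagonal_apply, mul_ite, mul_zero,
      Finset.sum_ite_eq', Finset.mem_univ, if_true] at this
    refine Complex.ofReal_injective (this.symm.trans ?_)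
    push_cast
    refine Finset.sum_congr rfl fun s _ => ?_
    rw [mul_right_comm, ← Complex.conj_mul']
    rfl
  rw [hgam]
  exact (convex_Icc lo hi).sum_mem (fun s _ => sq_nonneg _) hw fun s _ => hlam s

lemma ritzValue_mem_Icc {ι κ : Type*} [Fintype ι] [Fintype κ] [DecidableEq ι] [DecidableEq κ]
    {A P : Matrix ι ι ℂ} {lam : ι → ℝ} (hP : Pᴴ * P = 1)
    (hA : Pᴴ * A * P = diagonal fun a => (lam a : ℂ)) {U : Matrix ι κ ℂ} (hU : Uᴴ * U = 1)
    {Phat : Matrix κ κ ℂ} {gam : κ → ℝ} (hPhat : Phatᴴ * Phat = 1)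
    (hG : Phatᴴ * (Uᴴ * A * U) * Phat = diagonal fun i => (gam i : ℂ))
    {lo hi : ℝ} (hlam : ∀ a, lam a ∈ Set.Icc lo hi) (i : κ) : gam i ∈ Set.Icc lo hi := by
  have hA' : A = P * diagonal (fun a => (lam a : ℂ)) * Pᴴ := by
    simpa using pow_eq_mul_pow_mul_conjTranspose hP hA 1
  refine mem_Icc_of_diagonal_compression (Z := Pᴴ * U * Phat) ?_ ?_ hlam i
  · simp only [conjTranspose_mul, conjTranspose_conjTranspose, Matrix.mul_assoc]
    rw [← Matrix.mul_assoc P, mul_eq_one_comm.mp hP, Matrix.one_mul, ← Matrix.mul_assoc Uᴴ, hU,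
      Matrix.one_mul, hPhat]
  · rw [← hG, hA']
    simp only [conjTranspose_mul, conjTranspose_conjTranspose, Matrix.mul_assoc]

section BivariateFunction

variable {ι κ : Type*} [Fintype ι] [Fintype κ]

/-- `f{A,B}(C)` for `A = P diag(lam) Pᴴ` and `B = Q diag(mu) Qᴴ`. -/
def bivariateMatrixFun (P : Matrix ι ι ℂ) (lam : ι → ℝ) (Q : Matrix κ κ ℂ) (mu : κ → ℝ)
    (f : ℝ → ℝ → ℂ) (C : Matrix ι κ ℂ) : Matrix ι κ ℂ :=
  P * (of (fun a b => f (lam a) (mu b)) ⊙ (Pᴴ * C * Q.map (starRingEnd ℂ))) * Qᵀ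

def bivariatePolynomial {k l : ℕ} (p : Fin k → Fin l → ℂ) (x y : ℝ) : ℂ :=
  ∑ i : Fin k, ∑ j : Fin l, p i j * (x : ℂ) ^ (i : ℕ) * (y : ℂ) ^ (j : ℕ)

variable (P : Matrix ι ι ℂ) (lam : ι → ℝ) (Q : Matrix κ κ ℂ) (mu : κ → ℝ)

lemma bivariateMatrixFun_sub (f g : ℝ → ℝ → ℂ) (C : Matrix ι κ ℂ) :
    bivariateMatrixFun P lam Q mu (f - g) C =
      bivariateMatrixFun P lam Q mu f C - bivariateMatrixFun P lam Q mu g C := by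
  have hsub (M : Matrix ι κ ℂ) : of (fun a b => (f - g) (lam a) (mu b)) ⊙ M =
      of (fun a b => f (lam a) (mu b)) ⊙ M - of (fun a b => g (lam a) (mu b)) ⊙ M := by
    ext a b
    exact sub_mul _ _ _
  rw [bivariateMatrixFun, hsub, Matrix.mul_sub, Matrix.sub_mul]
  rfl

lemma bivariateMatrixFun_bivariatePolynomial [DecidableEq ι] [DecidableEq κ]
    {A : Matrix ι ι ℂ} {B : Matrix κ κ ℂ} (hP : Pᴴ * P = 1)
    (hA : Pᴴ * A * P = diagonal fun a => (lam a : ℂ)) (hQ : Qᴴ * Q = 1)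
    (hB : Qᴴ * B * Q = diagonal fun b => (mu b : ℂ)) {k l : ℕ} (p : Fin k → Fin l → ℂ)
    (C : Matrix ι κ ℂ) :
    bivariateMatrixFun P lam Q mu (bivariatePolynomial p) C =
      ∑ i : Fin k, ∑ j : Fin l, p i j • (A ^ (i : ℕ) * C * Bᵀ ^ (j : ℕ)) := by
  have hmonomials (M : Matrix ι κ ℂ) :
      of (fun a b => bivariatePolynomial p (lam a) (mu b)) ⊙ M =
        ∑ i : Fin k, ∑ j : Fin l, p i j • (diagonal (fun a => (lam a : ℂ)) ^ (i : ℕ) * M *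
          diagonal (fun b => (mu b : ℂ)) ^ (j : ℕ)) := by
    ext a b
    simp only [bivariatePolynomial, hadamard_apply, of_apply, Matrix.sum_apply,
      Matrix.smul_apply, diagonal_pow, diagonal_mul, mul_diagonal, Pi.pow_apply, Finset.sum_mul,
      smul_eq_mul]
    exact Finset.sum_congr rfl fun i _ => Finset.sum_congr rfl fun j _ => by ring
  simp only [bivariateMatrixFun, hmonomials, pow_eq_mul_pow_mul_conjTranspose hP hA,
    transpose_pow_eq_map_mul_pow_mul_transpose hQ hB, Matrix.mul_sum, Matrix.sum_mul,
    Matrix.mul_smul, Matrix.smul_mul, Matrix.mul_assoc]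

end BivariateFunction

lemma mul_vecMulVec_mul_transpose {ι ι' κ κ' : Type*} [Fintype ι] [Fintype κ]
    (M : Matrix ι' ι ℂ) (u : ι → ℂ) (v : κ → ℂ) (N : Matrix κ' κ ℂ) :
    M * vecMulVec u v * Nᵀ = vecMulVec (M *ᵥ u) (N *ᵥ v) := by
  rw [mul_vecMulVec, vecMulVec_mul, vecMul_transpose]

lemma frobNorm_bivariateMatrixFun_vecMulVec_le {m n : ℕ} {P : Matrix (Fin m) (Fin m) ℂ}
    {Q : Matrix (Fin n) (Fin n) ℂ} (hP : Pᴴ * P = 1) (hQ : Qᴴ * Q = 1) {lam : Fin m → ℝ}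
    {mu : Fin n → ℝ} {g : ℝ → ℝ → ℂ} {K : ℝ} (hK : 0 ≤ K)
    (hg : ∀ a b, ‖g (lam a) (mu b)‖ ≤ K) (u : Fin m → ℂ) (v : Fin n → ℂ) :
    frobNorm (bivariateMatrixFun P lam Q mu g (vecMulVec u v)) ≤ K * euclNorm u * euclNorm v := by
  have hP' : Pᴴᴴ * Pᴴ = 1 := by rw [conjTranspose_conjTranspose, mul_eq_one_comm, hP]
  have hQ' : Qᴴᴴ * Qᴴ = 1 := by rw [conjTranspose_conjTranspose, mul_eq_one_comm, hQ]
  have hQbar : Q.map (starRingEnd ℂ) = Qᴴᵀ := rfl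
  rw [bivariateMatrixFun, frobNorm_mul_mul_transpose_of_isometry hP hQ, hQbar,
    mul_vecMulVec_mul_transpose]
  calc _ ≤ K * frobNorm (vecMulVec (Pᴴ *ᵥ u) (Qᴴ *ᵥ v)) := frobNorm_hadamard_le hK hg _
    _ = K * euclNorm u * euclNorm v := by
      rw [frobNorm_vecMulVec, euclNorm_mulVec_of_isometry hP', euclNorm_mulVec_of_isometry hQ',
        mul_assoc]

lemma mulVec_conjTranspose_mulVec_of_mem_span {ι κ : Type*} [Fintype ι] [Fintype κ]
    [DecidableEq κ] {U : Matrix ι κ ℂ} (hU : Uᴴ * U = 1)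
    {v : ι → ℂ} (hv : v ∈ Submodule.span ℂ (Set.range U.col)) : U *ᵥ (Uᴴ *ᵥ v) = v := by
  rw [← range_mulVecLin] at hv
  obtain ⟨x, rfl⟩ := hv
  rw [mulVecLin_apply, mulVec_mulVec, mulVec_mulVec, Matrix.mul_assoc, hU, Matrix.mul_one]

lemma krylov_compression_pow_mulVec {ι κ : Type*} [Fintype ι] [Fintype κ] [DecidableEq ι]
    [DecidableEq κ] {A : Matrix ι ι ℂ} {U : Matrix ι κ ℂ} (hU : Uᴴ * U = 1)
    {c : ι → ℂ} {k : ℕ} (hc : ∀ i < k, A ^ i *ᵥ c ∈ Submodule.span ℂ (Set.range U.col)) :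
    ∀ i < k, U *ᵥ ((Uᴴ * A * U) ^ i *ᵥ (Uᴴ *ᵥ c)) = A ^ i *ᵥ c := by
  intro i
  induction i with
  | zero =>
    intro h
    simpa using mulVec_conjTranspose_mulVec_of_mem_span hU (by simpa using hc 0 h)
  | succ i ih =>
    intro h
    calc U *ᵥ ((Uᴴ * A * U) ^ (i + 1) *ᵥ (Uᴴ *ᵥ c))
        = U *ᵥ (Uᴴ *ᵥ (A *ᵥ (U *ᵥ ((Uᴴ * A * U) ^ i *ᵥ (Uᴴ *ᵥ c))))) := by
          simp only [pow_succ', ← mulVec_mulVec]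
      _ = U *ᵥ (Uᴴ *ᵥ (A ^ (i + 1) *ᵥ c)) := by rw [ih (by omega), mulVec_mulVec c A, ← pow_succ']
      _ = A ^ (i + 1) *ᵥ c := mulVec_conjTranspose_mulVec_of_mem_span hU (hc (i + 1) h)

lemma krylov_approx_eq_of_bivariatePolynomial {ι κ : Type*} [Fintype ι] [Fintype κ]
    [DecidableEq ι] [DecidableEq κ] {k l : ℕ}
    {A P : Matrix ι ι ℂ} {B Q : Matrix κ κ ℂ} {lam : ι → ℝ} {mu : κ → ℝ} (hP : Pᴴ * P = 1)
    (hQ : Qᴴ * Q = 1) (hA : Pᴴ * A * P = diagonal fun a => (lam a : ℂ))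
    (hB : Qᴴ * B * Q = diagonal fun b => (mu b : ℂ)) {c : ι → ℂ} {d : κ → ℂ}
    {U : Matrix ι (Fin k) ℂ} {V : Matrix κ (Fin l) ℂ} (hU : Uᴴ * U = 1) (hV : Vᴴ * V = 1)
    (hc : ∀ i < k, A ^ i *ᵥ c ∈ Submodule.span ℂ (Set.range U.col))
    (hd : ∀ j < l, B ^ j *ᵥ d ∈ Submodule.span ℂ (Set.range V.col))
    {Phat : Matrix (Fin k) (Fin k) ℂ} {Qhat : Matrix (Fin l) (Fin l) ℂ} {gam : Fin k → ℝ}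
    {eta : Fin l → ℝ} (hPhat : Phatᴴ * Phat = 1) (hQhat : Qhatᴴ * Qhat = 1)
    (hG : Phatᴴ * (Uᴴ * A * U) * Phat = diagonal fun i => (gam i : ℂ))
    (hH : Qhatᴴ * (Vᴴ * B * V) * Qhat = diagonal fun j => (eta j : ℂ))
    (p : Fin k → Fin l → ℂ) :
    U * bivariateMatrixFun Phat gam Qhat eta (bivariatePolynomial p)
        (vecMulVec (Uᴴ *ᵥ c) (Vᴴ *ᵥ d)) * Vᵀ =
      bivariateMatrixFun P lam Q mu (bivariatePolynomial p) (vecMulVec c d) := by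
  rw [bivariateMatrixFun_bivariatePolynomial _ _ _ _ hPhat hG hQhat hH,
    bivariateMatrixFun_bivariatePolynomial _ _ _ _ hP hA hQ hB]
  simp only [Matrix.mul_sum, Matrix.sum_mul, Matrix.mul_smul, Matrix.smul_mul]
  refine Finset.sum_congr rfl fun i _ => Finset.sum_congr rfl fun j _ => ?_
  rw [← transpose_pow, ← transpose_pow, mul_vecMulVec_mul_transpose, mul_vecMulVec_mul_transpose,
    mul_vecMulVec_mul_transpose, krylov_compression_pow_mulVec hU hc i i.isLt,
    krylov_compression_pow_mulVec hV hd j j.isLt]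

lemma frobNorm_krylov_error_le_of_exact {m n k l : ℕ} {P : Matrix (Fin m) (Fin m) ℂ}
    {Q : Matrix (Fin n) (Fin n) ℂ} {U : Matrix (Fin m) (Fin k) ℂ} {V : Matrix (Fin n) (Fin l) ℂ}
    {Phat : Matrix (Fin k) (Fin k) ℂ} {Qhat : Matrix (Fin l) (Fin l) ℂ} (hP : Pᴴ * P = 1)
    (hQ : Qᴴ * Q = 1) (hU : Uᴴ * U = 1) (hV : Vᴴ * V = 1) (hPhat : Phatᴴ * Phat = 1)
    (hQhat : Qhatᴴ * Qhat = 1) {lam : Fin m → ℝ} {mu : Fin n → ℝ} {gam : Fin k → ℝ}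
    {eta : Fin l → ℝ} {c : Fin m → ℂ} {d : Fin n → ℂ} {f h : ℝ → ℝ → ℂ}
    (hexact : U * bivariateMatrixFun Phat gam Qhat eta h (vecMulVec (Uᴴ *ᵥ c) (Vᴴ *ᵥ d)) * Vᵀ =
      bivariateMatrixFun P lam Q mu h (vecMulVec c d))
    {K : ℝ} (hK : 0 ≤ K) (hlam : ∀ a b, ‖f (lam a) (mu b) - h (lam a) (mu b)‖ ≤ K)
    (hgam : ∀ i j, ‖f (gam i) (eta j) - h (gam i) (eta j)‖ ≤ K) :
    frobNorm (bivariateMatrixFun P lam Q mu f (vecMulVec c d) -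
        U * bivariateMatrixFun Phat gam Qhat eta f (vecMulVec (Uᴴ *ᵥ c) (Vᴴ *ᵥ d)) * Vᵀ) ≤
      2 * euclNorm c * euclNorm d * K := by
  have hsplit : bivariateMatrixFun P lam Q mu f (vecMulVec c d) -
      U * bivariateMatrixFun Phat gam Qhat eta f (vecMulVec (Uᴴ *ᵥ c) (Vᴴ *ᵥ d)) * Vᵀ =
      bivariateMatrixFun P lam Q mu (f - h) (vecMulVec c d) -
        U * bivariateMatrixFun Phat gam Qhat eta (f - h) (vecMulVec (Uᴴ *ᵥ c) (Vᴴ *ᵥ d)) * Vᵀ := by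
    rw [bivariateMatrixFun_sub, bivariateMatrixFun_sub, Matrix.mul_sub, Matrix.sub_mul, hexact]
    abel
  have hproj := mul_le_mul (euclNorm_conjTranspose_mulVec_le hU c)
    (euclNorm_conjTranspose_mulVec_le hV d) (euclNorm_nonneg _) (euclNorm_nonneg c)
  calc _ ≤ frobNorm (bivariateMatrixFun P lam Q mu (f - h) (vecMulVec c d)) +
          frobNorm (bivariateMatrixFun Phat gam Qhat eta (f - h)
            (vecMulVec (Uᴴ *ᵥ c) (Vᴴ *ᵥ d))) := by
        rw [hsplit, ← frobNorm_mul_mul_transpose_of_isometry hU hV]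
        exact frobNorm_sub_le _ _
    _ ≤ K * euclNorm c * euclNorm d + K * euclNorm (Uᴴ *ᵥ c) * euclNorm (Vᴴ *ᵥ d) :=
      add_le_add (frobNorm_bivariateMatrixFun_vecMulVec_le hP hQ hK hlam c d)
        (frobNorm_bivariateMatrixFun_vecMulVec_le hPhat hQhat hK hgam _ _)
    _ ≤ 2 * euclNorm c * euclNorm d * K := by linarith [mul_le_mul_of_nonneg_left hproj hK]

theorem tensorized_krylov_convergence_hermitian_general {m n k l : ℕ}
    (A P : Matrix (Fin m) (Fin m) ℂ) (B Q : Matrix (Fin n) (Fin n) ℂ)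
    (lam : Fin m → ℝ) (mu : Fin n → ℝ)
    (hP : Pᴴ * P = 1) (hQ : Qᴴ * Q = 1)
    (hA : Pᴴ * A * P = Matrix.diagonal fun a => (lam a : ℂ))
    (hB : Qᴴ * B * Q = Matrix.diagonal fun b => (mu b : ℂ))
    (c : Fin m → ℂ) (d : Fin n → ℂ)
    (U : Matrix (Fin m) (Fin k) ℂ) (V : Matrix (Fin n) (Fin l) ℂ)
    (hU : Uᴴ * U = 1) (hV : Vᴴ * V = 1)
    (hspanU : Submodule.span ℂ {v : Fin m → ℂ | ∃ i < k, v = (A ^ i) *ᵥ c} =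
      Submodule.span ℂ (Set.range fun j : Fin k => fun a => U a j))
    (hspanV : Submodule.span ℂ {v : Fin n → ℂ | ∃ j < l, v = (B ^ j) *ᵥ d} =
      Submodule.span ℂ (Set.range fun j : Fin l => fun b => V b j))
    (Phat : Matrix (Fin k) (Fin k) ℂ) (Qhat : Matrix (Fin l) (Fin l) ℂ)
    (gam : Fin k → ℝ) (eta : Fin l → ℝ)
    (hPhat : Phatᴴ * Phat = 1) (hQhat : Qhatᴴ * Qhat = 1)
    (hG : Phatᴴ * (Uᴴ * A * U) * Phat = Matrix.diagonal fun i => (gam i : ℂ))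
    (hH : Qhatᴴ * (Vᴴ * B * V) * Qhat = Matrix.diagonal fun j => (eta j : ℂ))
    (aA bA aB bB : ℝ)
    (hlam : ∀ a, lam a ∈ Set.Icc aA bA) (hmu : ∀ b, mu b ∈ Set.Icc aB bB)
    (f : ℝ → ℝ → ℂ) :
    ∀ p : Fin k → Fin l → ℂ, ∀ K : ℝ,
      (∀ x ∈ Set.Icc aA bA, ∀ y ∈ Set.Icc aB bB,
        ‖f x y - ∑ i : Fin k, ∑ j : Fin l,
          p i j * (x : ℂ) ^ (i : ℕ) * (y : ℂ) ^ (j : ℕ)‖ ≤ K) →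
      frobNorm
        (P * (Matrix.of fun a b =>
            f (lam a) (mu b) * (Pᴴ * vecMulVec c d * Q.map (starRingEnd ℂ)) a b) * Qᵀ
          - U * (Phat * (Matrix.of fun i j =>
              f (gam i) (eta j) *
                (Phatᴴ * vecMulVec (Uᴴ *ᵥ c) (Vᴴ *ᵥ d) * Qhat.map (starRingEnd ℂ)) i j)
            * Qhatᵀ) * Vᵀ)
        ≤ 2 * euclNorm c * euclNorm d * K := by
  intro p K hK
  rcases Nat.eq_zero_or_pos m with rfl | hm
  · simp [frobNorm, euclNorm]
  rcases Nat.eq_zero_or_pos n with rfl | hn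
  · simp [frobNorm, euclNorm]
  have hK₀ : 0 ≤ K := (norm_nonneg _).trans (hK _ (hlam ⟨0, hm⟩) _ (hmu ⟨0, hn⟩))
  have hgam := ritzValue_mem_Icc hP hA hU hPhat hG hlam
  have heta := ritzValue_mem_Icc hQ hB hV hQhat hH hmu
  have hexact := krylov_approx_eq_of_bivariatePolynomial hP hQ hA hB hU hV
    (fun i hi => hspanU.le (Submodule.subset_span ⟨i, hi, rfl⟩))
    (fun j hj => hspanV.le (Submodule.subset_span ⟨j, hj, rfl⟩)) hPhat hQhat hG hH p
  exact frobNorm_krylov_error_le_of_exact hP hQ hU hV hPhat hQhat hexact hK₀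
    (fun a b => hK _ (hlam a) _ (hmu b)) (fun i j => hK _ (hgam i) _ (heta j))

/-- Convergence bound (Hermitian case, constant M = 1) for the tensorized Krylov method:
with `A = P diag(λ) Pᴴ`, `B = Q diag(μ) Qᴴ` Hermitian, `U`, `V` orthonormal bases of the
Krylov subspaces `K_k(A,c)`, `K_ℓ(B,d)` (of full dimension), `G = Uᴴ A U = P̂ diag(γ) P̂ᴴ`,
`H = Vᴴ B V = Q̂ diag(η) Q̂ᴴ`, all `λ_a ∈ [a_A, b_A]`, all `μ_b ∈ [a_B, b_B]`,
`X_f = P ((f(λ_a,μ_b))_{a,b} ∘ (Pᴴ (cdᵀ) Q̄)) Qᵀ` and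
`Y_f = P̂ ((f(γ_i,η_j))_{i,j} ∘ (P̂ᴴ (Uᴴc)(Vᴴd)ᵀ Q̂̄)) Q̂ᵀ`, one has, for every bivariate
polynomial `p` of bidegree at most `(k-1, ℓ-1)` and every uniform bound `K` on
`|f - p|` over `[a_A,b_A] × [a_B,b_B]`:
`‖X_f − U Y_f Vᵀ‖_F ≤ 2 ‖c‖₂ ‖d‖₂ K`. -/
theorem tensorized_krylov_convergence_hermitian {m n k l : ℕ}
    (A P : Matrix (Fin m) (Fin m) ℂ) (B Q : Matrix (Fin n) (Fin n) ℂ)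
    (lam : Fin m → ℝ) (mu : Fin n → ℝ)
    (hP : Pᴴ * P = 1) (hQ : Qᴴ * Q = 1)
    (hA : Pᴴ * A * P = Matrix.diagonal fun a => (lam a : ℂ))
    (hB : Qᴴ * B * Q = Matrix.diagonal fun b => (mu b : ℂ))
    (c : Fin m → ℂ) (d : Fin n → ℂ)
    (U : Matrix (Fin m) (Fin k) ℂ) (V : Matrix (Fin n) (Fin l) ℂ)
    (hU : Uᴴ * U = 1) (hV : Vᴴ * V = 1)
    (hspanU : Submodule.span ℂ {v : Fin m → ℂ | ∃ i < k, v = (A ^ i) *ᵥ c} =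
      Submodule.span ℂ (Set.range fun j : Fin k => fun a => U a j))
    (hdimU : Module.finrank ℂ
      (Submodule.span ℂ {v : Fin m → ℂ | ∃ i < k, v = (A ^ i) *ᵥ c}) = k)
    (hspanV : Submodule.span ℂ {v : Fin n → ℂ | ∃ j < l, v = (B ^ j) *ᵥ d} =
      Submodule.span ℂ (Set.range fun j : Fin l => fun b => V b j))
    (hdimV : Module.finrank ℂ
      (Submodule.span ℂ {v : Fin n → ℂ | ∃ j < l, v = (B ^ j) *ᵥ d}) = l)
    (Phat : Matrix (Fin k) (Fin k) ℂ) (Qhat : Matrix (Fin l) (Fin l) ℂ)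
    (gam : Fin k → ℝ) (eta : Fin l → ℝ)
    (hPhat : Phatᴴ * Phat = 1) (hQhat : Qhatᴴ * Qhat = 1)
    (hG : Phatᴴ * (Uᴴ * A * U) * Phat = Matrix.diagonal fun i => (gam i : ℂ))
    (hH : Qhatᴴ * (Vᴴ * B * V) * Qhat = Matrix.diagonal fun j => (eta j : ℂ))
    (aA bA aB bB : ℝ)
    (hlam : ∀ a, lam a ∈ Set.Icc aA bA) (hmu : ∀ b, mu b ∈ Set.Icc aB bB)
    (f : ℝ → ℝ → ℂ) :
    ∀ p : Fin k → Fin l → ℂ, ∀ K : ℝ,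
      (∀ x ∈ Set.Icc aA bA, ∀ y ∈ Set.Icc aB bB,
        ‖f x y - ∑ i : Fin k, ∑ j : Fin l,
          p i j * (x : ℂ) ^ (i : ℕ) * (y : ℂ) ^ (j : ℕ)‖ ≤ K) →
      frobNorm
        (P * (Matrix.of fun a b =>
            f (lam a) (mu b) * (Pᴴ * vecMulVec c d * Q.map (starRingEnd ℂ)) a b) * Qᵀ
          - U * (Phat * (Matrix.of fun i j =>
              f (gam i) (eta j) *
                (Phatᴴ * vecMulVec (Uᴴ *ᵥ c) (Vᴴ *ᵥ d) * Qhat.map (starRingEnd ℂ)) i j)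
            * Qhatᵀ) * Vᵀ)
        ≤ 2 * euclNorm c * euclNorm d * K :=
  tensorized_krylov_convergence_hermitian_general A P B Q lam mu hP hQ hA hB c d U V hU hV hspanU
    hspanV Phat Qhat gam eta hPhat hQhat hG hH aA bA aB bB hlam hmu f
end

section
/- Let A ∈ ℂ^{m×m} and B ∈ ℂ^{n×n} be Hermitian, with unitary P, Q and real eigenvalues such that P* A P = diag(λ_1,...,λ_m) and Q* B Q = diag(μ_1,...,μ_n). Let p(x,y) = Σ_{i=0}^{k} Σ_{j=0}^{ℓ} p_{ij} x^i y^j be a bivariate polynomial with p(λ_a, μ_b) ≠ 0 for all a, b. Then for every C ∈ ℂ^{m×n}, the matrix X = P ( ( p(λ_a, μ_b)^{-1} )_{a,b} ∘ (P* C Q̄) ) Q^T satisfies the linear matrix equation Σ_{i=0}^{k} Σ_{j=0}^{ℓ} p_{ij} A^i X (B^T)^j = C. -/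
/-!
Since `Pᴴ A P = Dλ` and `Qᴴ B Q = Dμ` are diagonal, `A P = P Dλ` and `Qᵀ Bᵀ = Dμ Qᵀ`, so every
term `Aⁱ (P Y Qᵀ) (Bᵀ)ʲ` equals `P (Dλⁱ Y Dμʲ) Qᵀ`. The equation is thereby conjugated to the
diagonal one `Σ pᵢⱼ Dλⁱ Y Dμʲ = Pᴴ C Q̄`, whose left side is the entrywise product of `Y` with
`(p(λ_a, μ_b))_{a,b}`; entrywise division solves it, and `P Pᴴ = Q̄ Qᵀ = 1` returns `C`.
-/

open Matrix

namespace Matrix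

variable {m n R : Type*} [Fintype m] [DecidableEq m] [Fintype n] [DecidableEq n]

theorem mul_eq_mul_of_conjTranspose_mul_mul_eq [CommRing R] [StarRing R] {A P D : Matrix n n R}
    (hP : Pᴴ * P = 1) (hA : Pᴴ * A * P = D) : A * P = P * D := by
  rw [← hA, ← Matrix.mul_assoc, ← Matrix.mul_assoc, mul_eq_one_comm.mp hP, Matrix.one_mul]

theorem pow_mul_mul_mul_pow_of_mul_eq [Semiring R] {A P D : Matrix m m R}
    {B Q E : Matrix n n R} (hAP : A * P = P * D) (hBQ : Q * B = E * Q) (M : Matrix m n R)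
    (i j : ℕ) : A ^ i * (P * M * Q) * B ^ j = P * (D ^ i * M * E ^ j) * Q := by
  have hA : P * D ^ i = A ^ i * P := (SemiconjBy.pow_right hAP.symm i :)
  have hB : Q * B ^ j = E ^ j * Q := (SemiconjBy.pow_right hBQ j :)
  calc A ^ i * (P * M * Q) * B ^ j = (A ^ i * P) * M * (Q * B ^ j) := by
        simp only [Matrix.mul_assoc]
    _ = P * (D ^ i * M * E ^ j) * Q := by
        rw [← hA, hB]; simp only [Matrix.mul_assoc]

theorem sum_smul_pow_mul_mul_mul_pow_of_mul_eq [CommSemiring R] {k l : ℕ}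
    (p : Fin (k + 1) → Fin (l + 1) → R) {A P D : Matrix m m R} {B Q E : Matrix n n R}
    (hAP : A * P = P * D) (hBQ : Q * B = E * Q) (M : Matrix m n R) :
    ∑ i : Fin (k + 1), ∑ j : Fin (l + 1), p i j • (A ^ (i : ℕ) * (P * M * Q) * B ^ (j : ℕ)) =
      P * (∑ i : Fin (k + 1), ∑ j : Fin (l + 1), p i j • (D ^ (i : ℕ) * M * E ^ (j : ℕ))) * Q := by
  simp only [pow_mul_mul_mul_pow_of_mul_eq hAP hBQ, Matrix.mul_sum, Matrix.sum_mul,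
    Matrix.mul_smul, Matrix.smul_mul]

theorem sum_smul_diagonal_pow_mul_mul_diagonal_pow [CommSemiring R] {k l : ℕ}
    (p : Fin (k + 1) → Fin (l + 1) → R) (d : m → R) (e : n → R) (M : Matrix m n R) :
    ∑ i : Fin (k + 1), ∑ j : Fin (l + 1),
      p i j • (diagonal d ^ (i : ℕ) * M * diagonal e ^ (j : ℕ)) =
    of fun a b => (∑ i : Fin (k + 1), ∑ j : Fin (l + 1),
      p i j * d a ^ (i : ℕ) * e b ^ (j : ℕ)) * M a b := by
  ext a b
  simp only [sum_apply, smul_apply, diagonal_pow, diagonal_mul, mul_diagonal, of_apply,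
    smul_eq_mul, Pi.pow_apply, Finset.sum_mul]
  exact Finset.sum_congr rfl fun i _ => Finset.sum_congr rfl fun j _ => by ring

theorem sum_smul_diagonal_pow_mul_mul_diagonal_pow_of_inv_mul [Field R] {k l : ℕ}
    (p : Fin (k + 1) → Fin (l + 1) → R) (d : m → R) (e : n → R)
    (hne : ∀ a b, ∑ i : Fin (k + 1), ∑ j : Fin (l + 1), p i j * d a ^ (i : ℕ) * e b ^ (j : ℕ) ≠ 0)
    (N : Matrix m n R) :
    ∑ i : Fin (k + 1), ∑ j : Fin (l + 1),
      p i j • (diagonal d ^ (i : ℕ) *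
        (of fun a b => (∑ i' : Fin (k + 1), ∑ j' : Fin (l + 1),
          p i' j' * d a ^ (i' : ℕ) * e b ^ (j' : ℕ))⁻¹ * N a b) * diagonal e ^ (j : ℕ)) = N := by
  rw [sum_smul_diagonal_pow_mul_mul_diagonal_pow]
  ext a b
  exact mul_inv_cancel_left₀ (hne a b) _

end Matrix

/-- The instance `f(x,y) = 1/p(x,y)`: for Hermitian `A = P diag(λ) Pᴴ` and
`B = Q diag(μ) Qᴴ` and a bivariate polynomial `p` with `p(λ_a, μ_b) ≠ 0` for all `a, b`,
the matrix `X = P ((p(λ_a, μ_b)⁻¹)_{a,b} ∘ (Pᴴ C Q̄)) Qᵀ` solves the linear matrix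
equation `Σᵢⱼ pᵢⱼ Aⁱ X (Bᵀ)ʲ = C`. -/
theorem polynomial_matrix_equation_solution_hermitian {m n k l : ℕ}
    (A P : Matrix (Fin m) (Fin m) ℂ) (B Q : Matrix (Fin n) (Fin n) ℂ)
    (lam : Fin m → ℝ) (mu : Fin n → ℝ)
    (hP : Pᴴ * P = 1) (hQ : Qᴴ * Q = 1)
    (hA : Pᴴ * A * P = Matrix.diagonal fun a => (lam a : ℂ))
    (hB : Qᴴ * B * Q = Matrix.diagonal fun b => (mu b : ℂ))
    (p : Fin (k + 1) → Fin (l + 1) → ℂ)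
    (hne : ∀ a b, (∑ i : Fin (k + 1), ∑ j : Fin (l + 1),
      p i j * (lam a : ℂ) ^ (i : ℕ) * (mu b : ℂ) ^ (j : ℕ)) ≠ 0)
    (C : Matrix (Fin m) (Fin n) ℂ) :
    ∑ i : Fin (k + 1), ∑ j : Fin (l + 1),
      p i j • (A ^ (i : ℕ) *
        (P * (Matrix.of fun a b =>
          (∑ i' : Fin (k + 1), ∑ j' : Fin (l + 1),
            p i' j' * (lam a : ℂ) ^ (i' : ℕ) * (mu b : ℂ) ^ (j' : ℕ))⁻¹ *
          (Pᴴ * C * Q.map (starRingEnd ℂ)) a b) * Qᵀ)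
        * Bᵀ ^ (j : ℕ)) = C := by
  have hAP := mul_eq_mul_of_conjTranspose_mul_mul_eq hP hA
  have hBQ : Qᵀ * Bᵀ = (diagonal fun b => (mu b : ℂ)) * Qᵀ := by
    rw [← transpose_mul, mul_eq_mul_of_conjTranspose_mul_mul_eq hQ hB, transpose_mul,
      diagonal_transpose]
  have hQQ : Q.map (starRingEnd ℂ) * Qᵀ = 1 := by
    change Qᴴᵀ * Qᵀ = 1
    rw [← transpose_mul, mul_eq_one_comm.mp hQ, transpose_one]
  rw [sum_smul_pow_mul_mul_mul_pow_of_mul_eq p hAP hBQ,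
    sum_smul_diagonal_pow_mul_mul_diagonal_pow_of_inv_mul p _ _ hne, ← Matrix.mul_assoc,
    ← Matrix.mul_assoc, mul_eq_one_comm.mp hP, Matrix.one_mul, Matrix.mul_assoc, hQQ,
    Matrix.mul_one]
end
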